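/- Define V(x1, x2, z5, z6) = ½ (C1 c1 x1² + C2 c2 x2² + z5² + z6²). Along any differentiable solution τ ↦ (x1(τ), x2(τ), z5(τ), z6(τ)) of the averaged ESC closed-loop system, the function τ ↦ V(x1(τ), x2(τ), z5(τ), z6(τ)) is differentiable with derivative dV/dτ = −(a k1/ω0) (C1 c1 x1(τ) z5(τ) + C2 c2 x2(τ) z6(τ))², which is ≤ 0 for all τ. -/

import Mathlib

/- The averaged phase (z5, z6) = (cos θ̃, sin θ̃) rotates, so z5² + z6² is conserved, while the
position part of V decreases at the rate −(a k1/ω0) (C1 c1 x1 z5 + C2 c2 x2 z6)², because x' is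
−(a k1/ω0) (C1 c1 x1 z5 + C2 c2 x2 z6) times the vector (z5, z6). -/

/-- The averaged ESC closed-loop system with positive constants `a, k1, k2, ω0, C1, C2, c1, c2`:
`x1' = −(a k1/ω0) z5 (C1 c1 x1 z5 + C2 c2 x2 z6)`,
`x2' = −(a k1/ω0) z6 (C1 c1 x1 z5 + C2 c2 x2 z6)`,
`z5' = (a k2/ω0) z6 (C1 c1 x1 z6 − C2 c2 x2 z5)`,
`z6' = −(a k2/ω0) z5 (C1 c1 x1 z6 − C2 c2 x2 z5)`, holding for all `τ ∈ s`. -/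
def AvgESC (a k1 k2 ω0 C1 C2 c1 c2 : ℝ) (x1 x2 z5 z6 : ℝ → ℝ) (s : Set ℝ) : Prop :=
  ∀ τ ∈ s,
    HasDerivAt x1
      (-(a * k1 / ω0) * z5 τ * (C1 * c1 * x1 τ * z5 τ + C2 * c2 * x2 τ * z6 τ)) τ ∧
    HasDerivAt x2
      (-(a * k1 / ω0) * z6 τ * (C1 * c1 * x1 τ * z5 τ + C2 * c2 * x2 τ * z6 τ)) τ ∧
    HasDerivAt z5
      ((a * k2 / ω0) * z6 τ * (C1 * c1 * x1 τ * z6 τ - C2 * c2 * x2 τ * z5 τ)) τ ∧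
    HasDerivAt z6
      (-(a * k2 / ω0) * z5 τ * (C1 * c1 * x1 τ * z6 τ - C2 * c2 * x2 τ * z5 τ)) τ

namespace AvgESC

variable {a k1 k2 ω0 C1 C2 c1 c2 : ℝ} {x1 x2 z5 z6 : ℝ → ℝ} {s : Set ℝ} {τ : ℝ}

theorem hasDerivAt_phase_sq_norm (hsol : AvgESC a k1 k2 ω0 C1 C2 c1 c2 x1 x2 z5 z6 s)
    (hτ : τ ∈ s) :
    HasDerivAt (fun σ => z5 σ ^ 2 + z6 σ ^ 2) 0 τ := by
  obtain ⟨-, -, h5, h6⟩ := hsol τ hτ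
  exact ((h5.pow 2).add (h6.pow 2)).congr_deriv (by ring)

theorem hasDerivAt_position_energy (hsol : AvgESC a k1 k2 ω0 C1 C2 c1 c2 x1 x2 z5 z6 s)
    (hτ : τ ∈ s) :
    HasDerivAt (fun σ => (C1 * c1 * x1 σ ^ 2 + C2 * c2 * x2 σ ^ 2) / 2)
      (-(a * k1 / ω0) * (C1 * c1 * x1 τ * z5 τ + C2 * c2 * x2 τ * z6 τ) ^ 2) τ := by
  obtain ⟨h1, h2, -, -⟩ := hsol τ hτ
  exact ((((h1.pow 2).const_mul (C1 * c1)).add ((h2.pow 2).const_mul (C2 * c2))).div_const 2)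
    |>.congr_deriv (by ring)

theorem hasDerivAt_lyapunov (hsol : AvgESC a k1 k2 ω0 C1 C2 c1 c2 x1 x2 z5 z6 s)
    (hτ : τ ∈ s) :
    HasDerivAt
      (fun σ => (C1 * c1 * x1 σ ^ 2 + C2 * c2 * x2 σ ^ 2 + z5 σ ^ 2 + z6 σ ^ 2) / 2)
      (-(a * k1 / ω0) * (C1 * c1 * x1 τ * z5 τ + C2 * c2 * x2 τ * z6 τ) ^ 2) τ := by
  have hsum := (hsol.hasDerivAt_position_energy hτ).add
    ((hsol.hasDerivAt_phase_sq_norm hτ).div_const 2)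
  rw [zero_div, add_zero] at hsum
  refine hsum.congr_of_eventuallyEq (.of_forall fun σ => ?_)
  simp only [Pi.add_apply]
  ring

end AvgESC

theorem stmt13_general (a k1 k2 ω0 C1 C2 c1 c2 : ℝ)
    (ha : 0 < a) (hk1 : 0 < k1) (hω0 : 0 < ω0)
    (x1 x2 z5 z6 : ℝ → ℝ)
    (hsol : AvgESC a k1 k2 ω0 C1 C2 c1 c2 x1 x2 z5 z6 Set.univ) :
    ∀ τ : ℝ,
      HasDerivAt
        (fun σ => (C1 * c1 * x1 σ ^ 2 + C2 * c2 * x2 σ ^ 2 + z5 σ ^ 2 + z6 σ ^ 2) / 2)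
        (-(a * k1 / ω0) * (C1 * c1 * x1 τ * z5 τ + C2 * c2 * x2 τ * z6 τ) ^ 2) τ ∧
      -(a * k1 / ω0) * (C1 * c1 * x1 τ * z5 τ + C2 * c2 * x2 τ * z6 τ) ^ 2 ≤ 0 := by
  intro τ
  refine ⟨hsol.hasDerivAt_lyapunov (Set.mem_univ τ), ?_⟩
  rw [neg_mul, neg_nonpos]
  positivity

/-- Along any differentiable solution of the averaged ESC closed-loop system,
`V = ½(C1 c1 x1² + C2 c2 x2² + z5² + z6²)` is differentiable in `τ` with derivative
`−(a k1/ω0)(C1 c1 x1 z5 + C2 c2 x2 z6)² ≤ 0`. -/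
theorem stmt13 (a k1 k2 ω0 C1 C2 c1 c2 : ℝ)
    (ha : 0 < a) (hk1 : 0 < k1) (hk2 : 0 < k2) (hω0 : 0 < ω0)
    (hC1 : 0 < C1) (hC2 : 0 < C2) (hc1 : 0 < c1) (hc2 : 0 < c2)
    (x1 x2 z5 z6 : ℝ → ℝ)
    (hsol : AvgESC a k1 k2 ω0 C1 C2 c1 c2 x1 x2 z5 z6 Set.univ) :
    ∀ τ : ℝ,
      HasDerivAt
        (fun σ => (C1 * c1 * x1 σ ^ 2 + C2 * c2 * x2 σ ^ 2 + z5 σ ^ 2 + z6 σ ^ 2) / 2)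
        (-(a * k1 / ω0) * (C1 * c1 * x1 τ * z5 τ + C2 * c2 * x2 τ * z6 τ) ^ 2) τ ∧
      -(a * k1 / ω0) * (C1 * c1 * x1 τ * z5 τ + C2 * c2 * x2 τ * z6 τ) ^ 2 ≤ 0 :=
  stmt13_general a k1 k2 ω0 C1 C2 c1 c2 ha hk1 hω0 x1 x2 z5 z6 hsol
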